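/- arXiv:0912.0597 — 2 statements merged into one kernel-verified Lean document; each statement's English description precedes it below -/
import Mathlib

section
/- Let $(X,\mathcal{B})$ be a $t$-$(v,k,\lambda)$ design with $b$ blocks, let $s \le t$ be a positive integer, let $\lambda_s$ denote the number of blocks through any fixed $s$-element subset of $X$, and suppose $\binom{k}{s}$ divides $\lambda_s$. Consider the set of incident pairs $(T,B)$ where $B \in \mathcal{B}$ is a block and $T \subseteq B$ is an $s$-element subset. Then there exists a coloring $c$ of these incident pairs with $\binom{k}{s}$ colors such that: (i) for each block $B$, the map $T \mapsto c(T,B)$ is a bijection from the $s$-element subsets of $B$ to the set of colors, and (ii) for each $s$-element subset $T$ of $X$ and each color $\gamma$, the number of blocks $B$ containing $T$ with $c(T,B) = \gamma$ is exactly $\lambda_s / \binom{k}{s}$. -/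
/-!
The pairs `(T, B)` with `T` an `s`-subset of the block `B` form a biregular bipartite graph:
every block has `C(k,s)` neighbours and every `s`-subset has `λ_s = C(k,s) * q`. Hall's theorem,
applied after replacing each `s`-subset by `q` copies, picks one `s`-subset `g B ⊆ B` per block
so that every `s`-subset is picked exactly `q` times. Deleting these edges leaves a biregular
graph of degrees `C(k,s) - 1` and `(C(k,s) - 1) * q`, so repeating splits all edges into
`C(k,s)` such classes, which are the colours.
-/

open Finset

universe u v

variable {ι : Type u} {κ : Type v} [DecidableEq κ]

structure IsBiregular (s : Finset ι) (t : Finset κ) (N : ι → Finset κ) (d e : ℕ) : Prop where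
  subset : ∀ a ∈ s, N a ⊆ t
  card_left : ∀ a ∈ s, #(N a) = d
  card_right : ∀ b ∈ t, #{a ∈ s | b ∈ N a} = e

namespace IsBiregular

variable {s : Finset ι} {t : Finset κ} {N : ι → Finset κ} {d e : ℕ}

theorem card_mul_eq (h : IsBiregular s t N d e) : #s * d = #t * e :=
  card_mul_eq_card_mul (fun a b => b ∈ N a)
    (fun a ha => by
      rw [bipartiteAbove, filter_mem_eq_inter, inter_eq_right.2 (h.subset a ha), h.card_left a ha])
    h.card_right

theorem card_mul_le_card_biUnion_mul (h : IsBiregular s t N d e) {S : Finset ι} (hS : S ⊆ s) :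
    #S * d ≤ #(S.biUnion N) * e :=
  card_mul_le_card_mul (fun a b => b ∈ N a)
    (fun a ha => by
      rw [bipartiteAbove, filter_mem_eq_inter, inter_eq_right.2 (subset_biUnion_of_mem N ha),
        h.card_left a (hS ha)])
    (fun b hb => by
      obtain ⟨a, ha, hba⟩ := mem_biUnion.1 hb
      exact (card_le_card (filter_subset_filter _ hS)).trans
        (h.card_right b (h.subset a (hS ha) hba)).le)

theorem exists_fiber_card_eq [Nonempty κ] {q : ℕ} (h : IsBiregular s t N d (d * q)) (hd : 0 < d) :
    ∃ g : ι → κ, (∀ a ∈ s, g a ∈ N a) ∧ ∀ b ∈ t, #{a ∈ s | g a = b} = q := by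
  classical
  -- Hall's theorem, with every `b ∈ t` replaced by `q` copies `(b, j)`.
  have hall : ∀ S : Finset s, #S ≤ #(S.biUnion fun a => N a ×ˢ (univ : Finset (Fin q))) := by
    intro S
    have hS := h.card_mul_le_card_biUnion_mul (S := S.map (Function.Embedding.subtype _))
      fun a ha => by obtain ⟨x, -, rfl⟩ := mem_map.1 ha; exact x.2
    have hprod : (S.biUnion fun a => N a ×ˢ (univ : Finset (Fin q)))
        = (S.map (Function.Embedding.subtype _)).biUnion N ×ˢ univ := by
      ext; simp
    rw [hprod, card_product, card_univ, Fintype.card_fin]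
    rw [card_map] at hS
    exact Nat.le_of_mul_le_mul_right (hS.trans_eq (by ring)) hd
  obtain ⟨f, hf_inj, hf⟩ := (all_card_le_biUnion_card_iff_exists_injective _).1 hall
  let g : ι → κ := fun a => if ha : a ∈ s then (f ⟨a, ha⟩).1 else Classical.arbitrary κ
  have hg : ∀ a ∈ s, g a ∈ N a := fun a ha => by
    simpa [g, ha] using (mem_product.1 (hf ⟨a, ha⟩)).1
  have hfiber_le : ∀ b, #{a ∈ s | g a = b} ≤ q := by
    intro b
    rw [← attach_map_val (s := s), filter_map, card_map]
    calc #{x ∈ s.attach | g x.1 = b} ≤ #(univ : Finset (Fin q)) :=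
          card_le_card_of_injOn (fun x => (f x).2) (fun _ _ => mem_coe.2 (mem_univ _))
            fun x hx y hy hxy => hf_inj (Prod.ext (by simp_all [g]) hxy)
      _ = q := by simp
  have hsum : ∑ b ∈ t, #{a ∈ s | g a = b} = ∑ _b ∈ t, q := by
    rw [← card_eq_sum_card_fiberwise fun a ha => h.subset a ha (hg a ha), sum_const, smul_eq_mul]
    have := h.card_mul_eq
    rw [mul_comm _ d, mul_left_comm] at this
    exact Nat.eq_of_mul_eq_mul_left hd this
  exact ⟨g, hg, (sum_eq_sum_iff_of_le fun b _ => hfiber_le b).1 hsum⟩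

theorem erase {q : ℕ} (h : IsBiregular s t N (d + 1) ((d + 1) * q)) {g : ι → κ}
    (hg : ∀ a ∈ s, g a ∈ N a) (hfiber : ∀ b ∈ t, #{a ∈ s | g a = b} = q) :
    IsBiregular s t (fun a => (N a).erase (g a)) d (d * q) where
  subset a ha := (erase_subset _ _).trans (h.subset a ha)
  card_left a ha := by rw [card_erase_of_mem (hg a ha), h.card_left a ha, Nat.add_sub_cancel]
  card_right b hb := by
    have hsplit := card_filter_add_card_filter_not (s := {a ∈ s | b ∈ N a}) (g · = b)
    rw [filter_filter, filter_filter, h.card_right b hb] at hsplit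
    have hhit : {a ∈ s | b ∈ N a ∧ g a = b} = {a ∈ s | g a = b} :=
      filter_congr fun a ha => and_iff_right_of_imp fun hab => hab ▸ hg a ha
    have hmiss : {a ∈ s | b ∈ N a ∧ ¬g a = b} = {a ∈ s | b ∈ (N a).erase (g a)} :=
      filter_congr fun a _ => by rw [mem_erase, and_comm, ne_comm]
    rw [hhit, hmiss, hfiber b hb] at hsplit
    linarith

theorem exists_coloring [Nonempty κ] {n q : ℕ} (hn : 0 < n) (h : IsBiregular s t N n (n * q)) :
    ∃ c : κ → ι → Fin n, (∀ a ∈ s, ∀ i, ∃! b, b ∈ N a ∧ c b a = i) ∧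
      ∀ b ∈ t, ∀ i, #{a ∈ s | b ∈ N a ∧ c b a = i} = q := by
  induction n, hn using Nat.le_induction generalizing N with
  | base =>
    refine ⟨fun _ _ => 0, fun a ha i => ?_, fun b hb i => ?_⟩
    · obtain ⟨b, hb⟩ := card_eq_one.1 (h.card_left a ha)
      simp [hb, Subsingleton.elim i 0]
    · simp [Subsingleton.elim i 0, h.card_right b hb]
  | succ n hn ih =>
    obtain ⟨g, hg, hfiber⟩ := h.exists_fiber_card_eq (Nat.succ_pos n)
    obtain ⟨c, hcB, hcT⟩ := ih (h.erase hg hfiber)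
    let c' : κ → ι → Fin (n + 1) := fun b a => if b = g a then Fin.last n else (c b a).castSucc
    have hc'_last : ∀ b a, c' b a = Fin.last n ↔ b = g a := fun b a => by
      by_cases hb : b = g a <;> simp [c', hb, Fin.castSucc_ne_last]
    have hc'_castSucc : ∀ b a j, c' b a = j.castSucc ↔ b ≠ g a ∧ c b a = j := fun b a j => by
      by_cases hb : b = g a <;> simp [c', hb, (Fin.castSucc_ne_last j).symm]
    refine ⟨c', fun a ha i => ?_, fun b hb i => ?_⟩
    · induction i using Fin.lastCases with
      | last => exact ⟨g a, ⟨hg a ha, (hc'_last _ _).2 rfl⟩, fun b hb => (hc'_last b a).1 hb.2⟩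
      | cast j =>
        refine (existsUnique_congr fun b => ?_).1 (hcB a ha j)
        rw [hc'_castSucc, mem_erase]
        tauto
    · induction i using Fin.lastCases with
      | last =>
        rw [← hfiber b hb]
        refine congrArg card (filter_congr fun a ha => ?_)
        rw [hc'_last]
        exact ⟨fun hab => hab.2.symm, fun hab => ⟨hab ▸ hg a ha, hab.symm⟩⟩
      | cast j =>
        rw [← hcT b hb j]
        refine congrArg card (filter_congr fun a _ => ?_)
        rw [hc'_castSucc, mem_erase]
        tauto

end IsBiregular

theorem isBiregular_powersetCard {α : Type*} [DecidableEq α] {X : Finset α}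
    {𝓑 : Finset (Finset α)} {k s lams : ℕ} (hblocks : ∀ B ∈ 𝓑, B ⊆ X ∧ B.card = k)
    (hlams : ∀ S ⊆ X, S.card = s → #{B ∈ 𝓑 | S ⊆ B} = lams) :
    IsBiregular 𝓑 (X.powersetCard s) (powersetCard s) (k.choose s) lams where
  subset B hB := powersetCard_mono (hblocks B hB).1
  card_left B hB := by rw [card_powersetCard, (hblocks B hB).2]
  card_right T hT := by
    obtain ⟨hTX, hTs⟩ := mem_powersetCard.1 hT
    simpa only [mem_powersetCard, hTs, and_true] using hlams T hTX hTs

theorem stmt_5_general {α : Type*} [DecidableEq α]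
    (X : Finset α) (𝓑 : Finset (Finset α)) (k t : ℕ)
    (htk : t ≤ k)
    (hblocks : ∀ B ∈ 𝓑, B ⊆ X ∧ B.card = k)
    (s : ℕ) (hst : s ≤ t) (lams : ℕ)
    (hlams : ∀ S : Finset α, S ⊆ X → S.card = s →
      (𝓑.filter fun B => S ⊆ B).card = lams)
    (hdvd : k.choose s ∣ lams) :
    ∃ c : Finset α → Finset α → Fin (k.choose s),
      (∀ B ∈ 𝓑, ∀ γ : Fin (k.choose s),
        ∃! T : Finset α, T ⊆ B ∧ T.card = s ∧ c T B = γ) ∧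
      (∀ T : Finset α, T ⊆ X → T.card = s → ∀ γ : Fin (k.choose s),
        (𝓑.filter fun B => T ⊆ B ∧ c T B = γ).card = lams / k.choose s) := by
  obtain ⟨q, rfl⟩ := hdvd
  have hpos : 0 < k.choose s := Nat.choose_pos (hst.trans htk)
  obtain ⟨c, hcB, hcT⟩ :=
    (isBiregular_powersetCard (s := s) hblocks hlams).exists_coloring hpos
  refine ⟨c, fun B hB γ => ?_, fun T hTX hTs γ => ?_⟩
  · simpa only [mem_powersetCard, and_assoc] using hcB B hB γ
  · rw [Nat.mul_div_cancel_left q hpos, ← hcT T (mem_powersetCard.2 ⟨hTX, hTs⟩) γ]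
    simp only [mem_powersetCard, hTs, and_true]

/-- Let `(X, 𝓑)` be a `t-(v,k,λ)` design, let `s ≤ t` be a positive integer, let `λ_s` denote
the number of blocks through any fixed `s`-element subset of `X`, and suppose `C(k,s)`
divides `λ_s`.  Then there is a coloring `c` of the incident pairs `(T, B)` (with `B ∈ 𝓑`
a block and `T ⊆ B` an `s`-element subset) using `C(k,s)` colors such that:
(i) for each block `B`, the map `T ↦ c T B` is a bijection from the `s`-subsets of `B`
to the set of colors, and
(ii) for each `s`-element subset `T ⊆ X` and each color `γ`, the number of blocks `B`
containing `T` with `c T B = γ` is exactly `λ_s / C(k,s)`. -/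
theorem stmt_5 {α : Type*} [DecidableEq α]
    (X : Finset α) (𝓑 : Finset (Finset α)) (v k t lam : ℕ)
    (hv : X.card = v) (ht : 0 < t) (htk : t ≤ k) (hkv : k ≤ v) (hlam : 0 < lam)
    (hblocks : ∀ B ∈ 𝓑, B ⊆ X ∧ B.card = k)
    (hdesign : ∀ T ⊆ X, T.card = t → (𝓑.filter fun B => T ⊆ B).card = lam)
    (s : ℕ) (hs : 0 < s) (hst : s ≤ t) (lams : ℕ)
    (hlams : ∀ S : Finset α, S ⊆ X → S.card = s →
      (𝓑.filter fun B => S ⊆ B).card = lams)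
    (hdvd : k.choose s ∣ lams) :
    ∃ c : Finset α → Finset α → Fin (k.choose s),
      (∀ B ∈ 𝓑, ∀ γ : Fin (k.choose s),
        ∃! T : Finset α, T ⊆ B ∧ T.card = s ∧ c T B = γ) ∧
      (∀ T : Finset α, T ⊆ X → T.card = s → ∀ γ : Fin (k.choose s),
        (𝓑.filter fun B => T ⊆ B ∧ c T B = γ).card = lams / k.choose s) :=
  stmt_5_general X 𝓑 k t htk hblocks s hst lams hlams hdvd
end

section
/- Let $\mathcal{S}$ be a finite set of $k$ source states, $\mathcal{M}$ a finite set of messages, and $\mathcal{E}$ a finite set of $b$ encoding rules, each an injective map $e \colon \mathcal{S} \to \mathcal{M}$; write $M(e) = e(\mathcal{S})$ and, for $M^* \subseteq M(e)$, $f_e(M^*) = \{s \in \mathcal{S} : e(s) \in M^*\}$. Suppose both the encoding rules and the $t^*$-element subsets of source states are equiprobable, i.e. $p_E(e) = 1/b$ for all $e$ and $p_S(S') = 1/\binom{k}{t^*}$ for every $t^*$-element subset $S' \subseteq \mathcal{S}$. Then the secrecy condition $$\sum_{\{e : S^* = f_e(M^*)\}} p_E(e) = \sum_{\{e : M^* \subseteq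 M(e)\}} p_E(e)\, p_S(f_e(M^*))$$ holds for all $t^*$-element subsets $M^* \subseteq \mathcal{M}$ and $S^* \subseteq \mathcal{S}$ if and only if for every $t^*$-element subset $M^* \subseteq \mathcal{M}$, the number of encoding rules $e$ with $M^* \subseteq M(e)$ and $f_e(M^*) = S^*$ is the same for all $t^*$-element subsets $S^* \subseteq \mathcal{S}$. -/
/-!
Write `N(M*, S*)` for the number of rules with `M* ⊆ M(e)` and `f_e(M*) = S*`. For an injective
rule, `|f_e(M*)| = |M*|` exactly when `M* ⊆ M(e)`; hence for `|S*| = |M*|` the left-hand side of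
the secrecy condition is `N(M*, S*) / b`, and the rules with `M* ⊆ M(e)` are partitioned by the
`t*`-set `f_e(M*)`, making the right-hand side `∑_{S'} N(M*, S') / (b C(k, t*))`. So the
condition says that every count equals the average of the counts, i.e. all counts are equal.
-/

open Finset Function

theorem Finset.forall_card_nsmul_eq_sum_iff {ι M : Type*} [AddCommMonoid M] [IsAddTorsionFree M]
    (s : Finset ι) (f : ι → M) :
    (∀ i ∈ s, s.card • f i = ∑ j ∈ s, f j) ↔ ∀ i j, i ∈ s → j ∈ s → f i = f j := by
  constructor
  · intro h i j hi hj
    exact nsmul_right_injective (card_ne_zero_of_mem hi) ((h i hi).trans (h j hj).symm)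
  · intro h i hi
    rw [← sum_const, sum_congr rfl fun j hj => h i j hi hj]

section Encoding

variable {𝓢 𝓜 : Type*} [Fintype 𝓢] [DecidableEq 𝓜]

theorem card_filter_apply_mem_eq_card_iff {e : 𝓢 → 𝓜} (he : Injective e) (M : Finset 𝓜) :
    (univ.filter fun s => e s ∈ M).card = M.card ↔ M ⊆ univ.image e := by
  have himage : (univ.filter fun s => e s ∈ M).image e = M ∩ univ.image e := by
    ext m
    simp only [mem_image, mem_filter, mem_univ, true_and, mem_inter]
    grind
  rw [← card_image_of_injective _ he, himage, ← inter_eq_left]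
  exact ⟨eq_of_subset_of_card_le inter_subset_left ∘ Eq.ge, congrArg card⟩

variable [DecidableEq 𝓢]

theorem filter_eq_filter_apply_mem_eq_filter_subset_image {𝓔 : Finset (𝓢 → 𝓜)}
    (hinj : ∀ e ∈ 𝓔, Injective e) {M : Finset 𝓜} {S : Finset 𝓢} (hMS : M.card = S.card) :
    𝓔.filter (fun e => S = univ.filter fun s => e s ∈ M)
      = 𝓔.filter fun e => M ⊆ univ.image e ∧ (univ.filter fun s => e s ∈ M) = S := by
  refine filter_congr fun e he => ⟨fun hS => ⟨?_, hS.symm⟩, fun h => h.2.symm⟩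
  rw [← card_filter_apply_mem_eq_card_iff (hinj e he), ← hS, hMS]

theorem card_filter_subset_image_eq_sum {𝓔 : Finset (𝓢 → 𝓜)} (hinj : ∀ e ∈ 𝓔, Injective e)
    {M : Finset 𝓜} {t : ℕ} (hM : M.card = t) :
    (𝓔.filter fun e => M ⊆ univ.image e).card
      = ∑ S ∈ powersetCard t univ,
          (𝓔.filter fun e => M ⊆ univ.image e ∧ (univ.filter fun s => e s ∈ M) = S).card := by
  rw [card_eq_sum_card_fiberwise (f := fun e => univ.filter fun s => e s ∈ M)
    (t := powersetCard t univ)]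
  · simp only [filter_filter]
  · intro e he
    obtain ⟨he𝓔, hMe⟩ := mem_filter.mp he
    exact mem_powersetCard.mpr
      ⟨subset_univ _, hM ▸ (card_filter_apply_mem_eq_card_iff (hinj e he𝓔) M).mpr hMe⟩

end Encoding

theorem stmt_11_general {𝓢 𝓜 : Type*} [Fintype 𝓢] [Fintype 𝓜] [DecidableEq 𝓢] [DecidableEq 𝓜]
    (𝓔 : Finset (𝓢 → 𝓜)) (h𝓔 : 𝓔.Nonempty) (hinj : ∀ e ∈ 𝓔, Function.Injective e)
    (k : ℕ) (hk : Fintype.card 𝓢 = k) (b : ℕ) (hb : 𝓔.card = b)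
    (tstar : ℕ)
    (pE : (𝓢 → 𝓜) → ℝ) (hpE : ∀ e ∈ 𝓔, pE e = 1 / (b : ℝ))
    (pS : Finset 𝓢 → ℝ)
    (hpS : ∀ S' : Finset 𝓢, S'.card = tstar → pS S' = 1 / (k.choose tstar : ℝ)) :
    (∀ Mstar : Finset 𝓜, Mstar.card = tstar →
      ∀ Sstar : Finset 𝓢, Sstar.card = tstar →
        (∑ e ∈ 𝓔.filter (fun e => Sstar = Finset.univ.filter fun s => e s ∈ Mstar), pE e)
          = ∑ e ∈ 𝓔.filter (fun e => Mstar ⊆ Finset.univ.image e),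
              pE e * pS (Finset.univ.filter fun s => e s ∈ Mstar))
    ↔ (∀ Mstar : Finset 𝓜, Mstar.card = tstar →
        ∀ S₁ S₂ : Finset 𝓢, S₁.card = tstar → S₂.card = tstar →
          (𝓔.filter fun e => Mstar ⊆ Finset.univ.image e ∧
              (Finset.univ.filter fun s => e s ∈ Mstar) = S₁).card
          = (𝓔.filter fun e => Mstar ⊆ Finset.univ.image e ∧
              (Finset.univ.filter fun s => e s ∈ Mstar) = S₂).card) := by
  have hb0 : (b : ℝ) ≠ 0 := by rw [← hb]; exact_mod_cast h𝓔.card_ne_zero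
  refine forall₂_congr fun M hM => ?_
  set N := fun S : Finset 𝓢 =>
    (𝓔.filter fun e => M ⊆ univ.image e ∧ (univ.filter fun s => e s ∈ M) = S).card
  have hsum : ∑ e ∈ 𝓔.filter (fun e => M ⊆ univ.image e),
      pE e * pS (univ.filter fun s => e s ∈ M)
        = (∑ S ∈ powersetCard tstar univ, N S : ℕ) * (1 / b * (1 / k.choose tstar)) := by
    rw [← card_filter_subset_image_eq_sum hinj hM, ← nsmul_eq_mul, ← sum_const]
    refine sum_congr rfl fun e he => ?_
    obtain ⟨he𝓔, hMe⟩ := mem_filter.mp he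
    rw [hpE e he𝓔, hpS _ (hM ▸ (card_filter_apply_mem_eq_card_iff (hinj e he𝓔) M).mpr hMe)]
  have hsecrecy : ∀ S : Finset 𝓢, S.card = tstar →
      (((∑ e ∈ 𝓔.filter (fun e => S = univ.filter fun s => e s ∈ M), pE e)
          = ∑ e ∈ 𝓔.filter (fun e => M ⊆ univ.image e),
              pE e * pS (univ.filter fun s => e s ∈ M))
        ↔ (powersetCard tstar (univ : Finset 𝓢)).card • N S
            = ∑ S' ∈ powersetCard tstar univ, N S') := by
    intro S hS
    have hC : (k.choose tstar : ℝ) ≠ 0 := by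
      rw [← hk, ← hS]; exact_mod_cast (Nat.choose_pos (card_le_univ S)).ne'
    rw [filter_eq_filter_apply_mem_eq_filter_subset_image hinj (hM.trans hS.symm),
      sum_congr rfl fun e he => hpE e (mem_filter.mp he).1, sum_const, hsum,
      card_powersetCard, card_univ, hk, smul_eq_mul, nsmul_eq_mul]
    field_simp
    rw [mul_comm]
    exact_mod_cast Iff.rfl
  simp only [← mem_powersetCard_univ (k := tstar)] at hsecrecy ⊢
  exact (forall₂_congr hsecrecy).trans (forall_card_nsmul_eq_sum_iff _ N)

/-- `𝓢` is a finite set of `k` source states, `𝓜` a finite set of messages, `𝓔` a finite set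
of `b` encoding rules (injections `𝓢 → 𝓜`); `M(e) = e(𝓢)` and `f_e(M*) = {s : e s ∈ M*}`.
Suppose encoding rules and `t*`-subsets of source states are equiprobable:
`p_E e = 1/b` and `p_S S' = 1/C(k,t*)` for every `t*`-subset `S'`.  Then the secrecy
condition `∑_{e : S* = f_e(M*)} p_E e = ∑_{e : M* ⊆ M(e)} p_E e * p_S (f_e M*)` holds
for all `t*`-subsets `M* ⊆ 𝓜` and `S* ⊆ 𝓢` iff for every `t*`-subset `M* ⊆ 𝓜`, the
number of encoding rules `e` with `M* ⊆ M(e)` and `f_e(M*) = S*` is the same for all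
`t*`-subsets `S* ⊆ 𝓢`. -/
theorem stmt_11 {𝓢 𝓜 : Type*} [Fintype 𝓢] [Fintype 𝓜] [DecidableEq 𝓢] [DecidableEq 𝓜]
    (𝓔 : Finset (𝓢 → 𝓜)) (h𝓔 : 𝓔.Nonempty) (hinj : ∀ e ∈ 𝓔, Function.Injective e)
    (k : ℕ) (hk : Fintype.card 𝓢 = k) (b : ℕ) (hb : 𝓔.card = b)
    (tstar : ℕ) (htstar : 0 < tstar)
    (pE : (𝓢 → 𝓜) → ℝ) (hpE : ∀ e ∈ 𝓔, pE e = 1 / (b : ℝ))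
    (pS : Finset 𝓢 → ℝ)
    (hpS : ∀ S' : Finset 𝓢, S'.card = tstar → pS S' = 1 / (k.choose tstar : ℝ)) :
    (∀ Mstar : Finset 𝓜, Mstar.card = tstar →
      ∀ Sstar : Finset 𝓢, Sstar.card = tstar →
        (∑ e ∈ 𝓔.filter (fun e => Sstar = Finset.univ.filter fun s => e s ∈ Mstar), pE e)
          = ∑ e ∈ 𝓔.filter (fun e => Mstar ⊆ Finset.univ.image e),
              pE e * pS (Finset.univ.filter fun s => e s ∈ Mstar))
    ↔ (∀ Mstar : Finset 𝓜, Mstar.card = tstar →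
        ∀ S₁ S₂ : Finset 𝓢, S₁.card = tstar → S₂.card = tstar →
          (𝓔.filter fun e => Mstar ⊆ Finset.univ.image e ∧
              (Finset.univ.filter fun s => e s ∈ Mstar) = S₁).card
          = (𝓔.filter fun e => Mstar ⊆ Finset.univ.image e ∧
              (Finset.univ.filter fun s => e s ∈ Mstar) = S₂).card) :=
  stmt_11_general 𝓔 h𝓔 hinj k hk b hb tstar pE hpE pS hpS
end
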